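/- arXiv:1311.2415 — 2 statements merged into one kernel-verified Lean document; each statement's English description precedes it below -/
import Mathlib

section
/- For any function f : [a,b] → ℝ, c ≥ 0, and any function g : [a,b] → ℝ with ‖g − f‖_∞ ≤ c/2, the truncated variation satisfies TV^c(f,[a,b]) ≤ TV^0(g,[a,b]), i.e. the truncated variation of f at level c is bounded above by the total variation of any function within uniform distance c/2 of f. -/
/-!
Each increment of `f` differs from the corresponding increment of `g` by at most
`c/2 + c/2 = c`, so its `c`-truncation is at most the absolute increment of `g`. Summing over
a partition bounds every sum defining `truncVar f a b c` by a sum defining `truncVar g a b 0`.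
-/

open scoped ENNReal

/-- Truncated variation of `f` on `[a,b]` at level `c`, valued in `[0,∞]`. -/
noncomputable def truncVar (f : ℝ → ℝ) (a b c : ℝ) : ℝ≥0∞ :=
  ⨆ (n : ℕ) (t : Fin (n + 1) → ℝ) (_ : StrictMono t)
    (_ : ∀ i, t i ∈ Set.Icc a b),
    ∑ i : Fin n, ENNReal.ofReal
      (max (|f (t i.succ) - f (t i.castSucc)| - c) 0)

lemma max_abs_sub_le_abs_of_abs_sub_le {u v c : ℝ} (h : |u - v| ≤ c) :
    max (|u| - c) 0 ≤ |v| :=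
  max_le (by linarith [abs_sub_abs_le_abs_sub u v]) (abs_nonneg v)

lemma truncVar_mono {f g : ℝ → ℝ} {a b c c' : ℝ}
    (h : ∀ x ∈ Set.Icc a b, ∀ y ∈ Set.Icc a b,
      max (|f y - f x| - c) 0 ≤ max (|g y - g x| - c') 0) :
    truncVar f a b c ≤ truncVar g a b c' := by
  refine iSup_le fun n => iSup_le fun t => iSup_le fun ht => iSup_le fun hmem => ?_
  refine le_trans ?_ (le_iSup₂_of_le n t <| le_iSup₂_of_le ht hmem le_rfl)
  exact Finset.sum_le_sum fun i _ =>
    ENNReal.ofReal_le_ofReal (h _ (hmem i.castSucc) _ (hmem i.succ))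

theorem truncVar_le_totalVar_general (f g : ℝ → ℝ) (a b c : ℝ)
    (hg : ∀ x ∈ Set.Icc a b, |g x - f x| ≤ c / 2) :
    truncVar f a b c ≤ truncVar g a b 0 := by
  refine truncVar_mono fun x hx y hy => ?_
  have hincr : |(f y - f x) - (g y - g x)| ≤ c :=
    calc |(f y - f x) - (g y - g x)| = |(g x - f x) - (g y - f y)| := congrArg abs (by ring)
      _ ≤ |g x - f x| + |g y - f y| := abs_sub _ _
      _ ≤ c / 2 + c / 2 := add_le_add (hg x hx) (hg y hy)
      _ = c := add_halves c
  rw [sub_zero, max_eq_left (abs_nonneg (g y - g x))]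
  exact max_abs_sub_le_abs_of_abs_sub_le hincr

theorem truncVar_le_totalVar (f g : ℝ → ℝ) (a b c : ℝ) (hc : 0 ≤ c)
    (hg : ∀ x ∈ Set.Icc a b, |g x - f x| ≤ c / 2) :
    truncVar f a b c ≤ truncVar g a b 0 :=
  truncVar_le_totalVar_general f g a b c hg
end

section
/- Suppose f₁, f₂ : [a,b] → ℝ are continuous non-decreasing functions with f₁(a) = f₂(a) = 0 such that the Stieltjes measures df₁ and df₂ are mutually singular (carried by disjoint sets). Then the total variation of g(t) = x + f₁(t) − f₂(t) on [a,b] equals f₁(b) + f₂(b). -/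
/-! Let `df₁ S = 0` and `df₂ Sᶜ = 0`. By inner and outer regularity there is a compact
`K ⊆ S ∩ (a, b]` carrying almost all of `df₂` on `(a, b]` and an open `U ⊇ K` of small
`df₁`-measure. On a partition of `[a, b]` so fine that every cell meeting `K` lies in `U`, the
increments `Δ₁, Δ₂` of `f₁, f₂` on each cell satisfy `|Δ₁ - Δ₂| = Δ₁ + Δ₂ - 2 min Δ₁ Δ₂`, and the
sum of the minima is at most `df₁ U + df₂ ((a, b] \ K)`, which is small. -/

open Set MeasureTheory Metric
open scoped ENNReal

theorem MeasureTheory.Measure.MutuallySingular.exists_isCompact_isOpen_lt {X : Type*}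
    [TopologicalSpace X] [MeasurableSpace X] [OpensMeasurableSpace X] [T2Space X]
    {μ ν : Measure X} [μ.OuterRegular] [ν.InnerRegularCompactLTTop] (h : μ ⟂ₘ ν)
    {A : Set X} (hA : MeasurableSet A) (hνA : ν A ≠ ∞) {ε : ℝ≥0∞} (hε : ε ≠ 0) :
    ∃ K U, IsCompact K ∧ IsOpen U ∧ K ⊆ U ∧ μ U + ν (A \ K) < ε := by
  obtain ⟨K, hKA, hK, hνK⟩ := (hA.inter h.measurableSet_nullSet).exists_isCompact_sdiff_lt
    (measure_ne_top_of_subset inter_subset_left hνA) (ENNReal.half_pos hε).ne'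
  have hμK : μ K = 0 := measure_mono_null (hKA.trans inter_subset_right) h.measure_nullSet
  obtain ⟨U, hKU, hU, hμU⟩ := K.exists_isOpen_lt_of_lt (ε / 2) (hμK ▸ ENNReal.half_pos hε)
  have hνAK : ν (A \ K) = ν ((A ∩ h.nullSet) \ K) := by
    rw [← measure_inter_conull h.measure_compl_nullSet, inter_sdiff_right_comm]
  exact ⟨K, U, hK, hU, hKU, ENNReal.add_halves ε ▸ hνAK ▸ ENNReal.add_lt_add hμU hνK⟩

theorem exists_monotone_partition_Icc_subordinate {a b : ℝ} (hab : a ≤ b) {K U : Set ℝ}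
    (hK : IsCompact K) (hU : IsOpen U) (hKU : K ⊆ U) :
    ∃ (n : ℕ) (t : ℕ → ℝ), Monotone t ∧ t 0 = a ∧ t n = b ∧ (∀ i, t i ∈ Icc a b) ∧
      ∀ i, (Ioc (t i) (t (i + 1)) ∩ K).Nonempty → Ioc (t i) (t (i + 1)) ⊆ U := by
  obtain ⟨r, hr, hrU⟩ := hK.exists_thickening_subset_open hU hKU
  obtain ⟨n, hn⟩ := exists_nat_ge ((b - a) / (r / 2))
  set t : ℕ → ℝ := fun i => min (a + i * (r / 2)) b
  have hstep : ∀ i, t (i + 1) ≤ t i + r / 2 := fun i => by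
    simp only [t, ← min_add_add_right]
    push_cast
    exact min_le_min (by linarith) (by linarith)
  refine ⟨n, t, fun i j hij => ?_, by simp [t, hab], ?_, fun i => ?_, ?_⟩
  · exact min_le_min_right b (by gcongr)
  · exact min_eq_right (by rw [div_le_iff₀ (by positivity)] at hn; linarith)
  · exact ⟨le_min (le_add_of_nonneg_right (by positivity)) hab, min_le_right _ _⟩
  · rintro i ⟨z, hz, hzK⟩ y hy
    refine hrU (mem_thickening_iff.2 ⟨z, hzK, ?_⟩)
    rw [Real.dist_eq, abs_lt]
    constructor <;> linarith [hy.1, hy.2, hz.1, hz.2, hstep i]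

section MeasureIoc

variable {α : Type*} [LinearOrder α] [TopologicalSpace α] [OrderClosedTopology α]
  [MeasurableSpace α] [OpensMeasurableSpace α] {t : ℕ → α}

theorem Monotone.sum_measure_Ioc (ht : Monotone t) (μ : Measure α) (n : ℕ) :
    ∑ i ∈ Finset.range n, μ (Ioc (t i) (t (i + 1))) = μ (Ioc (t 0) (t n)) := by
  have hcover : ⋃ i ∈ Finset.range n, Ioc (t i) (t (i + 1)) = Ioc (t 0) (t n) := by
    simpa [Order.succ_eq_add_one] using ht.biUnion_Ico_Ioc_map_succ 0 n
  rw [← hcover, measure_biUnion_finset (f := fun i => Ioc (t i) (t (i + 1)))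
    (fun i _ j _ hij => ht.pairwise_disjoint_on_Ioc_succ hij) fun _ _ => measurableSet_Ioc]

theorem Monotone.sum_min_measure_Ioc_le (ht : Monotone t) (μ ν : Measure α) (n : ℕ)
    {K U : Set α} (hKU : ∀ i, (Ioc (t i) (t (i + 1)) ∩ K).Nonempty → Ioc (t i) (t (i + 1)) ⊆ U) :
    ∑ i ∈ Finset.range n, min (μ (Ioc (t i) (t (i + 1)))) (ν (Ioc (t i) (t (i + 1)))) ≤
      μ U + ν (Ioc (t 0) (t n) \ K) := by
  have hmin : ∀ i, min (μ (Ioc (t i) (t (i + 1)))) (ν (Ioc (t i) (t (i + 1)))) ≤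
      μ.restrict U (Ioc (t i) (t (i + 1))) + ν.restrict Kᶜ (Ioc (t i) (t (i + 1))) := by
    intro i
    rw [Measure.restrict_apply measurableSet_Ioc, Measure.restrict_apply measurableSet_Ioc]
    by_cases hmeet : (Ioc (t i) (t (i + 1)) ∩ K).Nonempty
    · rw [inter_eq_left.2 (hKU i hmeet)]
      exact (min_le_left _ _).trans le_self_add
    · rw [← sdiff_eq,
        (disjoint_iff_inter_eq_empty.2 (not_nonempty_iff_eq_empty.1 hmeet)).sdiff_eq_left]
      exact (min_le_right _ _).trans le_add_self
  calc _ ≤ ∑ i ∈ Finset.range n,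
        (μ.restrict U (Ioc (t i) (t (i + 1))) + ν.restrict Kᶜ (Ioc (t i) (t (i + 1)))) :=
        Finset.sum_le_sum fun i _ => hmin i
    _ = μ.restrict U (Ioc (t 0) (t n)) + ν.restrict Kᶜ (Ioc (t 0) (t n)) := by
        rw [Finset.sum_add_distrib, ht.sum_measure_Ioc, ht.sum_measure_Ioc]
    _ ≤ μ U + ν (Ioc (t 0) (t n) \ K) :=
        add_le_add ((measure_mono (subset_univ _)).trans_eq (Measure.restrict_apply_univ U))
          (Measure.restrict_apply measurableSet_Ioc).le

end MeasureIoc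

namespace StieltjesFunction

variable (f₁ f₂ : StieltjesFunction ℝ) (x : ℝ)

theorem edist_add_two_mul_min_measure_Ioc {s t : ℝ} (hst : s ≤ t) :
    edist (x + f₁ t - f₂ t) (x + f₁ s - f₂ s) +
        2 * min (f₁.measure (Ioc s t)) (f₂.measure (Ioc s t)) =
      f₁.measure (Ioc s t) + f₂.measure (Ioc s t) := by
  have h₁ : 0 ≤ f₁ t - f₁ s := sub_nonneg.2 (f₁.mono hst)
  have h₂ : 0 ≤ f₂ t - f₂ s := sub_nonneg.2 (f₂.mono hst)
  have hreal : |(x + f₁ t - f₂ t) - (x + f₁ s - f₂ s)| + 2 * min (f₁ t - f₁ s) (f₂ t - f₂ s) =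
      (f₁ t - f₁ s) + (f₂ t - f₂ s) := by
    have := max_sub_min_eq_abs' (f₁ t - f₁ s) (f₂ t - f₂ s)
    have := min_add_max (f₁ t - f₁ s) (f₂ t - f₂ s)
    rw [show (x + f₁ t - f₂ t) - (x + f₁ s - f₂ s) = (f₁ t - f₁ s) - (f₂ t - f₂ s) by ring]
    linarith
  rw [f₁.measure_Ioc, f₂.measure_Ioc, ← ENNReal.ofReal_min, edist_dist, Real.dist_eq,
    ← ENNReal.ofReal_add h₁ h₂, ← hreal, ENNReal.ofReal_add (abs_nonneg _) (by positivity),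
    ENNReal.ofReal_mul zero_le_two, ENNReal.ofReal_ofNat]

theorem eVariationOn_le_measure_Ioc_add (a b : ℝ) :
    eVariationOn (fun s => x + f₁ s - f₂ s) (Icc a b) ≤
      f₁.measure (Ioc a b) + f₂.measure (Ioc a b) := by
  refine iSup_le fun ⟨n, u, hu, hus⟩ => ?_
  have hsub : Ioc (u 0) (u n) ⊆ Ioc a b := Ioc_subset_Ioc (hus 0).1 (hus n).2
  calc ∑ i ∈ Finset.range n, edist (x + f₁ (u (i + 1)) - f₂ (u (i + 1)))
        (x + f₁ (u i) - f₂ (u i))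
      ≤ ∑ i ∈ Finset.range n,
          (f₁.measure (Ioc (u i) (u (i + 1))) + f₂.measure (Ioc (u i) (u (i + 1)))) :=
        Finset.sum_le_sum fun i _ =>
          f₁.edist_add_two_mul_min_measure_Ioc f₂ x (hu i.le_succ) ▸ le_self_add
    _ = f₁.measure (Ioc (u 0) (u n)) + f₂.measure (Ioc (u 0) (u n)) := by
        rw [Finset.sum_add_distrib, hu.sum_measure_Ioc, hu.sum_measure_Ioc]
    _ ≤ f₁.measure (Ioc a b) + f₂.measure (Ioc a b) :=
        add_le_add (measure_mono hsub) (measure_mono hsub)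

theorem measure_Ioc_add_le_eVariationOn_add {a b : ℝ} (hab : a ≤ b) {K U : Set ℝ}
    (hK : IsCompact K) (hU : IsOpen U) (hKU : K ⊆ U) :
    f₁.measure (Ioc a b) + f₂.measure (Ioc a b) ≤
      eVariationOn (fun s => x + f₁ s - f₂ s) (Icc a b) +
        2 * (f₁.measure U + f₂.measure (Ioc a b \ K)) := by
  obtain ⟨n, t, ht, ht0, htn, htab, htU⟩ := exists_monotone_partition_Icc_subordinate hab hK hU hKU
  calc f₁.measure (Ioc a b) + f₂.measure (Ioc a b)
      = ∑ i ∈ Finset.range n,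
          (f₁.measure (Ioc (t i) (t (i + 1))) + f₂.measure (Ioc (t i) (t (i + 1)))) := by
        rw [Finset.sum_add_distrib, ht.sum_measure_Ioc, ht.sum_measure_Ioc, ht0, htn]
    _ = ∑ i ∈ Finset.range n, edist (x + f₁ (t (i + 1)) - f₂ (t (i + 1)))
          (x + f₁ (t i) - f₂ (t i)) + 2 * ∑ i ∈ Finset.range n,
          min (f₁.measure (Ioc (t i) (t (i + 1)))) (f₂.measure (Ioc (t i) (t (i + 1)))) := by
        rw [Finset.mul_sum, ← Finset.sum_add_distrib]
        exact Finset.sum_congr rfl fun i _ =>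
          (f₁.edist_add_two_mul_min_measure_Ioc f₂ x (ht i.le_succ)).symm
    _ ≤ _ := by
        gcongr
        · exact eVariationOn.sum_le ht htab
        · simpa only [ht0, htn] using ht.sum_min_measure_Ioc_le f₁.measure f₂.measure n htU

end StieltjesFunction

theorem totalVar_eq_sum_of_singular_general (a b x : ℝ) (hab : a ≤ b)
    (f₁ f₂ : StieltjesFunction ℝ)
    (h₁a : f₁ a = 0) (h₂a : f₂ a = 0)
    (hsing : f₁.measure ⟂ₘ f₂.measure) :
    eVariationOn (fun s => x + f₁ s - f₂ s) (Set.Icc a b) =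
      ENNReal.ofReal (f₁ b + f₂ b) := by
  have hsum : ENNReal.ofReal (f₁ b + f₂ b) = f₁.measure (Ioc a b) + f₂.measure (Ioc a b) := by
    rw [f₁.measure_Ioc, f₂.measure_Ioc, h₁a, h₂a, sub_zero, sub_zero,
      ENNReal.ofReal_add (h₁a ▸ f₁.mono hab) (h₂a ▸ f₂.mono hab)]
  rw [hsum]
  refine le_antisymm (f₁.eVariationOn_le_measure_Ioc_add f₂ x a b)
    (ENNReal.le_of_forall_pos_le_add fun ε hε _ => ?_)
  obtain ⟨K, U, hK, hU, hKU, hsmall⟩ := hsing.exists_isCompact_isOpen_lt measurableSet_Ioc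
    measure_Ioc_lt_top.ne (ε := ε / 2) (by simpa using hε.ne')
  calc _ ≤ _ := f₁.measure_Ioc_add_le_eVariationOn_add f₂ x hab hK hU hKU
    _ ≤ eVariationOn (fun s => x + f₁ s - f₂ s) (Icc a b) + 2 * (ε / 2) := by gcongr
    _ = _ := by rw [ENNReal.mul_div_cancel two_ne_zero ENNReal.ofNat_ne_top]

theorem totalVar_eq_sum_of_singular (a b x : ℝ) (hab : a ≤ b)
    (f₁ f₂ : StieltjesFunction ℝ)
    (h₁c : Continuous f₁) (h₂c : Continuous f₂)
    (h₁a : f₁ a = 0) (h₂a : f₂ a = 0)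
    (hsing : f₁.measure ⟂ₘ f₂.measure) :
    eVariationOn (fun s => x + f₁ s - f₂ s) (Set.Icc a b) =
      ENNReal.ofReal (f₁ b + f₂ b) :=
  totalVar_eq_sum_of_singular_general a b x hab f₁ f₂ h₁a h₂a hsing
end
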